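/- arXiv:0909.0178 — 2 statements merged into one kernel-verified Lean document; each statement's English description precedes it below -/
import Mathlib

section
/- Fix K > 0. Let μ_n be probability measures on [−K,K] converging weakly to μ, and λ_n ∈ [0,1] converging to λ ∈ [0,1]. Then the rectangular R-transforms C^{(λ_n)}_{μ_n} converge to C^{(λ)}_μ uniformly on every compact subset of [0, K^{−2}). -/
/-!
For `c ∈ [0,1]` and `ν` carried by `[-K,K]`, on `D = [0, K⁻²)` the transform factors as
`C = M ∘ H⁻¹` with `M` nondecreasing and continuous and `H` a strictly increasing
bijection of `D`. Weak convergence gives `M_n → M`, hence `H_n → H`, pointwise on `D`.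
Two monotone sandwich arguments then pass to the composite: if `H_n → H` pointwise with `H`
strictly increasing, then solutions of `H_n v_n = y_n → H ξ` converge to `ξ`; and if monotone
`M_n → M` pointwise with `M` continuous at `ξ`, then `M_n u_n → M ξ` whenever `u_n → ξ`.
Run along `atTop ×ˢ 𝓝[S] x` (and, for a constant family, along `𝓝[S] x`, which gives continuity
of the limit), this is local uniform convergence on `S`, i.e. uniform convergence since `S` is
compact.
-/

open MeasureTheory Filter

noncomputable def Mfun (μ : Measure ℝ) (z : ℝ) : ℝ := ∫ t, t ^ 2 * z / (1 - t ^ 2 * z) ∂μ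

noncomputable def Tfun (c z : ℝ) : ℝ := (c * z + 1) * (z + 1)

noncomputable def Hfun (c : ℝ) (μ : Measure ℝ) (z : ℝ) : ℝ := z * Tfun c (Mfun μ z)

/-- `(H^{(c)}_ν)⁻¹`, the inverse of `H^{(c)}_ν` on `[0, K⁻²)`. -/
noncomputable def Hinv (c : ℝ) (μ : Measure ℝ) (K z : ℝ) : ℝ :=
  Function.invFunOn (Hfun c μ) (Set.Ico (0 : ℝ) (K ^ 2)⁻¹) z

/-- `(T^{(c)})⁻¹`, the inverse of `T^{(c)}` restricted to `[-1, ∞)`. -/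
noncomputable def Tinv (c y : ℝ) : ℝ := Function.invFunOn (Tfun c) (Set.Ici (-1 : ℝ)) y

/-- The rectangular R-transform with ratio `c` of `μ` (supported in `[-K,K]`). -/
noncomputable def Cfun (c : ℝ) (μ : Measure ℝ) (K z : ℝ) : ℝ :=
  if z = 0 then 0 else Tinv c (z / Hinv c μ K z)

open Set Topology

section MonotoneSandwich

variable {α β γ : Type*} [LinearOrder α] [LinearOrder γ] [TopologicalSpace γ] [OrderTopology γ]
  {l : Filter β} {D : Set α}

theorem eventually_lt_of_monotoneOn_apply_eq (hD : D.OrdConnected) {H : β → α → γ}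
    {h : α → γ} (hH : ∀ b, MonotoneOn (H b) D)
    (hHh : ∀ w ∈ D, Tendsto (fun b => H b w) l (𝓝 (h w))) (hh : StrictMonoOn h D)
    {ξ : α} (hξ : ξ ∈ D) {v : β → α} {y : β → γ} (hy : Tendsto y l (𝓝 (h ξ)))
    (hv : ∀ᶠ b in l, v b ∈ D ∧ H b (v b) = y b) {a : α} (ha : a < ξ) :
    ∀ᶠ b in l, a < v b := by
  by_cases haD : a ∈ D
  · filter_upwards [(hHh a haD).eventually_lt hy (hh haD hξ ha), hv] with b hb ⟨hvD, hHv⟩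
    by_contra! hva
    exact (hH b hvD haD hva).not_gt (hHv ▸ hb)
  · filter_upwards [hv] with b hb
    by_contra! hva
    exact haD (hD.out hb.1 hξ ⟨hva, ha.le⟩)

variable [TopologicalSpace α] [OrderTopology α]

theorem tendsto_of_monotoneOn_apply_eq (hD : D.OrdConnected) {H : β → α → γ}
    {h : α → γ} (hH : ∀ b, MonotoneOn (H b) D)
    (hHh : ∀ w ∈ D, Tendsto (fun b => H b w) l (𝓝 (h w))) (hh : StrictMonoOn h D)
    {ξ : α} (hξ : ξ ∈ D) {v : β → α} {y : β → γ} (hy : Tendsto y l (𝓝 (h ξ)))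
    (hv : ∀ᶠ b in l, v b ∈ D ∧ H b (v b) = y b) : Tendsto v l (𝓝 ξ) :=
  tendsto_order.2 ⟨fun _ ha => eventually_lt_of_monotoneOn_apply_eq hD hH hHh hh hξ hy hv ha,
    fun _ ha => eventually_lt_of_monotoneOn_apply_eq (α := αᵒᵈ) (γ := γᵒᵈ) hD.dual
      (fun b => (hH b).dual) hHh hh.dual hξ hy hv ha⟩

theorem eventually_lt_apply_of_monotoneOn {F : β → α → γ} {f : α → γ}
    (hF : ∀ b, MonotoneOn (F b) D) (hFf : ∀ w ∈ D, Tendsto (fun b => F b w) l (𝓝 (f w)))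
    {ξ : α} (hξ : ξ ∈ D) (hf : ContinuousWithinAt f D ξ) {u : β → α}
    (hu : Tendsto u l (𝓝[D] ξ)) {c : γ} (hc : c < f ξ) : ∀ᶠ b in l, c < F b (u b) := by
  -- A lower comparison point: some `a < ξ` in `D` close to `ξ`, or `ξ` itself if `D` has
  -- no points just below `ξ`.
  obtain ⟨a, haD, hca, hau⟩ : ∃ a ∈ D, c < f a ∧ ∀ᶠ w in 𝓝[D] ξ, a ≤ w := by
    rcases eq_or_neBot (𝓝[D ∩ Iio ξ] ξ) with hbot | hne
    · rw [nhdsWithin_inter', inf_principal_eq_bot, compl_Iio] at hbot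
      exact ⟨ξ, hξ, hc, hbot⟩
    · obtain ⟨a, hca, haD, haξ⟩ := ((hf.mono (inter_subset_left (t := Iio ξ))).eventually
        (eventually_gt_nhds hc) |>.and self_mem_nhdsWithin).exists
      exact ⟨a, haD, hca, mem_nhdsWithin_of_mem_nhds (eventually_ge_nhds haξ)⟩
  filter_upwards [(hFf a haD).eventually (eventually_gt_nhds hca),
    hu.eventually (hau.and self_mem_nhdsWithin)] with b hb ⟨hab, hbD⟩
  exact hb.trans_le (hF b haD hbD hab)

theorem tendsto_apply_of_monotoneOn {F : β → α → γ} {f : α → γ}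
    (hF : ∀ b, MonotoneOn (F b) D) (hFf : ∀ w ∈ D, Tendsto (fun b => F b w) l (𝓝 (f w)))
    {ξ : α} (hξ : ξ ∈ D) (hf : ContinuousWithinAt f D ξ) {u : β → α}
    (hu : Tendsto u l (𝓝[D] ξ)) : Tendsto (fun b => F b (u b)) l (𝓝 (f ξ)) :=
  tendsto_order.2 ⟨fun _ hc => eventually_lt_apply_of_monotoneOn hF hFf hξ hf hu hc,
    fun _ hc => eventually_lt_apply_of_monotoneOn (α := αᵒᵈ) (γ := γᵒᵈ)
      (fun b => (hF b).dual) hFf hξ hf hu hc⟩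

end MonotoneSandwich

section RectangularRTransform

variable {K : ℝ}

theorem monotoneOn_div_one_sub : MonotoneOn (fun s : ℝ => s / (1 - s)) (Iio 1) := by
  intro s hs r hr hsr
  rw [mem_Iio] at hs hr
  rw [div_le_div_iff₀ (by linarith) (by linarith)]
  nlinarith

theorem sq_mul_le_sq_mul {t z : ℝ} (ht : t ∈ Icc (-K) K) (hz : 0 ≤ z) : t ^ 2 * z ≤ K ^ 2 * z :=
  mul_le_mul_of_nonneg_right (sq_le_sq' ht.1 ht.2) hz

theorem sq_mul_div_one_sub_mem_Icc {t z r : ℝ} (ht : t ∈ Icc (-K) K) (hz : z ∈ Icc 0 r)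
    (hr : K ^ 2 * r < 1) : t ^ 2 * z / (1 - t ^ 2 * z) ∈ Icc 0 (K ^ 2 * r / (1 - K ^ 2 * r)) := by
  have hle : t ^ 2 * z ≤ K ^ 2 * r :=
    (sq_mul_le_sq_mul ht hz.1).trans (mul_le_mul_of_nonneg_left hz.2 (sq_nonneg K))
  have h0 : 0 ≤ t ^ 2 * z := mul_nonneg (sq_nonneg t) hz.1
  refine ⟨div_nonneg h0 (by linarith), ?_⟩
  exact monotoneOn_div_one_sub (mem_Iio.2 (hle.trans_lt hr)) (mem_Iio.2 hr) hle

theorem sq_mul_lt_one_of_mem_Ico {z : ℝ} (hz : z ∈ Ico 0 (K ^ 2)⁻¹) : K ^ 2 * z < 1 := by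
  rcases eq_or_ne K 0 with rfl | hK
  · simp
  · calc K ^ 2 * z < K ^ 2 * (K ^ 2)⁻¹ := mul_lt_mul_of_pos_left hz.2 (by positivity)
      _ = 1 := mul_inv_cancel₀ (by positivity)

variable {ν : Measure ℝ}

theorem integrable_sq_mul_div_one_sub [IsFiniteMeasure ν] (hν : ∀ᵐ t ∂ν, t ∈ Icc (-K) K)
    {z : ℝ} (hz : z ∈ Ico 0 (K ^ 2)⁻¹) :
    Integrable (fun t => t ^ 2 * z / (1 - t ^ 2 * z)) ν := by
  refine (integrable_const (K ^ 2 * z / (1 - K ^ 2 * z))).mono'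
    (by fun_prop : Measurable fun t : ℝ => t ^ 2 * z / (1 - t ^ 2 * z)).aestronglyMeasurable ?_
  filter_upwards [hν] with t ht
  have h := sq_mul_div_one_sub_mem_Icc ht ⟨hz.1, le_rfl⟩ (sq_mul_lt_one_of_mem_Ico hz)
  rw [Real.norm_of_nonneg h.1]
  exact h.2

theorem Mfun_zero : Mfun ν 0 = 0 := by
  simp [Mfun]

theorem Mfun_nonneg (hν : ∀ᵐ t ∂ν, t ∈ Icc (-K) K) {z : ℝ} (hz : z ∈ Ico 0 (K ^ 2)⁻¹) :
    0 ≤ Mfun ν z :=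
  integral_nonneg_of_ae <| hν.mono fun _ ht =>
    (sq_mul_div_one_sub_mem_Icc ht ⟨hz.1, le_rfl⟩ (sq_mul_lt_one_of_mem_Ico hz)).1

theorem Mfun_monotoneOn [IsFiniteMeasure ν] (hν : ∀ᵐ t ∂ν, t ∈ Icc (-K) K) :
    MonotoneOn (Mfun ν) (Ico 0 (K ^ 2)⁻¹) := by
  intro z₁ hz₁ z₂ hz₂ hz
  refine integral_mono_ae (integrable_sq_mul_div_one_sub hν hz₁)
    (integrable_sq_mul_div_one_sub hν hz₂) ?_
  filter_upwards [hν] with t ht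
  have h₁₂ : t ^ 2 * z₁ ≤ t ^ 2 * z₂ := mul_le_mul_of_nonneg_left hz (sq_nonneg t)
  have h₂ : t ^ 2 * z₂ < 1 := (sq_mul_le_sq_mul ht hz₂.1).trans_lt (sq_mul_lt_one_of_mem_Ico hz₂)
  exact monotoneOn_div_one_sub (h₁₂.trans_lt h₂) h₂ h₁₂

theorem Mfun_continuousOn [IsFiniteMeasure ν] (hν : ∀ᵐ t ∂ν, t ∈ Icc (-K) K) :
    ContinuousOn (Mfun ν) (Ico 0 (K ^ 2)⁻¹) := by
  intro z₀ hz₀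
  obtain ⟨r, hz₀r, hr⟩ := exists_between hz₀.2
  have hKr : K ^ 2 * r < 1 := sq_mul_lt_one_of_mem_Ico ⟨hz₀.1.trans hz₀r.le, hr⟩
  refine continuousWithinAt_of_dominated (bound := fun _ => K ^ 2 * r / (1 - K ^ 2 * r))
    (Eventually.of_forall fun z => (by fun_prop : Measurable fun t : ℝ =>
      t ^ 2 * z / (1 - t ^ 2 * z)).aestronglyMeasurable) ?_ (integrable_const _) ?_
  · filter_upwards [nhdsWithin_le_nhds (Iio_mem_nhds hz₀r), self_mem_nhdsWithin] with z hzr hz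
    filter_upwards [hν] with t ht
    have h := sq_mul_div_one_sub_mem_Icc ht ⟨hz.1, hzr.le⟩ hKr
    rw [Real.norm_of_nonneg h.1]
    exact h.2
  · filter_upwards [hν] with t ht
    have h : t ^ 2 * z₀ < 1 :=
      (sq_mul_le_sq_mul ht hz₀.1).trans_lt (sq_mul_lt_one_of_mem_Ico hz₀)
    exact (ContinuousAt.div (by fun_prop) (by fun_prop) (by linarith)).continuousWithinAt

theorem Tfun_strictMonoOn {c : ℝ} (hc : c ∈ Icc (0 : ℝ) 1) : StrictMonoOn (Tfun c) (Ici (-1)) := by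
  intro a ha b hb hab
  rw [mem_Ici] at ha hb
  -- `Tfun c b - Tfun c a = (b - a) * (c * (a + b + 2) + (1 - c))`
  have hpos : 0 < c * (a + b + 2) + (1 - c) := by
    rcases hc.2.lt_or_eq with hc1 | rfl
    · nlinarith [mul_nonneg hc.1 (by linarith : 0 ≤ a + b + 2)]
    · linarith
  simp only [Tfun]
  nlinarith [mul_pos (sub_pos.2 hab) hpos]

theorem one_le_Tfun {c w : ℝ} (hc : c ∈ Icc (0 : ℝ) 1) (hw : 0 ≤ w) : 1 ≤ Tfun c w := by
  simpa [Tfun] using (Tfun_strictMonoOn hc).monotoneOn (by norm_num : (0 : ℝ) ∈ Ici (-1))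
    (show w ∈ Ici (-1) by simp only [mem_Ici]; linarith) hw

theorem Tinv_Tfun {c w : ℝ} (hc : c ∈ Icc (0 : ℝ) 1) (hw : -1 ≤ w) : Tinv c (Tfun c w) = w :=
  (Tfun_strictMonoOn hc).injOn.leftInvOn_invFunOn hw

variable {c : ℝ}

theorem Hfun_zero : Hfun c ν 0 = 0 := by
  simp [Hfun]

theorem Hfun_strictMonoOn [IsFiniteMeasure ν] (hc : c ∈ Icc (0 : ℝ) 1)
    (hν : ∀ᵐ t ∂ν, t ∈ Icc (-K) K) : StrictMonoOn (Hfun c ν) (Ico 0 (K ^ 2)⁻¹) := by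
  intro z₁ hz₁ z₂ hz₂ hz
  have hM₁ := Mfun_nonneg hν hz₁
  have hM₂ := Mfun_nonneg hν hz₂
  have hT : Tfun c (Mfun ν z₁) ≤ Tfun c (Mfun ν z₂) :=
    (Tfun_strictMonoOn hc).monotoneOn (show Mfun ν z₁ ∈ Ici (-1) by simp only [mem_Ici]; linarith)
      (show Mfun ν z₂ ∈ Ici (-1) by simp only [mem_Ici]; linarith)
      (Mfun_monotoneOn hν hz₁ hz₂ hz.le)
  calc z₁ * Tfun c (Mfun ν z₁) ≤ z₁ * Tfun c (Mfun ν z₂) := mul_le_mul_of_nonneg_left hT hz₁.1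
    _ < z₂ * Tfun c (Mfun ν z₂) :=
      mul_lt_mul_of_pos_right hz (one_pos.trans_le (one_le_Tfun hc hM₂))

theorem Hfun_continuousOn [IsFiniteMeasure ν] (hν : ∀ᵐ t ∂ν, t ∈ Icc (-K) K) :
    ContinuousOn (Hfun c ν) (Ico 0 (K ^ 2)⁻¹) :=
  continuousOn_id.mul <| (by unfold Tfun; fun_prop : Continuous (Tfun c)).comp_continuousOn
    (Mfun_continuousOn hν)

theorem Hfun_surjOn [IsFiniteMeasure ν] (hc : c ∈ Icc (0 : ℝ) 1)
    (hν : ∀ᵐ t ∂ν, t ∈ Icc (-K) K) : SurjOn (Hfun c ν) (Ico 0 (K ^ 2)⁻¹) (Ico 0 (K ^ 2)⁻¹) := by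
  intro y hy
  have hsub : Icc 0 y ⊆ Ico 0 (K ^ 2)⁻¹ := Icc_subset_Ico_right hy.2
  have hHy : y ≤ Hfun c ν y := le_mul_of_one_le_right hy.1 (one_le_Tfun hc (Mfun_nonneg hν hy))
  obtain ⟨x, hx, hHx⟩ := intermediate_value_Icc hy.1 ((Hfun_continuousOn hν).mono hsub)
    ⟨Hfun_zero.trans_le hy.1, hHy⟩
  exact ⟨x, hsub hx, hHx⟩

theorem Hinv_mem [IsFiniteMeasure ν] (hc : c ∈ Icc (0 : ℝ) 1) (hν : ∀ᵐ t ∂ν, t ∈ Icc (-K) K)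
    {y : ℝ} (hy : y ∈ Ico 0 (K ^ 2)⁻¹) : Hinv c ν K y ∈ Ico 0 (K ^ 2)⁻¹ :=
  (Hfun_surjOn hc hν).mapsTo_invFunOn hy

theorem Hfun_Hinv [IsFiniteMeasure ν] (hc : c ∈ Icc (0 : ℝ) 1) (hν : ∀ᵐ t ∂ν, t ∈ Icc (-K) K)
    {y : ℝ} (hy : y ∈ Ico 0 (K ^ 2)⁻¹) : Hfun c ν (Hinv c ν K y) = y :=
  (Hfun_surjOn hc hν).rightInvOn_invFunOn hy

theorem Cfun_eq_Mfun_Hinv [IsFiniteMeasure ν] (hc : c ∈ Icc (0 : ℝ) 1)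
    (hν : ∀ᵐ t ∂ν, t ∈ Icc (-K) K) {z : ℝ} (hz : z ∈ Ico 0 (K ^ 2)⁻¹) :
    Cfun c ν K z = Mfun ν (Hinv c ν K z) := by
  have hmem := Hinv_mem hc hν hz
  have hH := Hfun_Hinv hc hν hz
  set x := Hinv c ν K z
  rcases eq_or_ne z 0 with rfl | hz0
  · have hx : x = 0 := (Hfun_strictMonoOn hc hν).injOn hmem hz (by rw [hH, Hfun_zero])
    simp [Cfun, hx, Mfun_zero]
  · have hx : x ≠ 0 := fun hx => hz0 (by rw [← hH, hx, Hfun_zero])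
    have hdiv : z / x = Tfun c (Mfun ν x) := by
      rw [div_eq_iff hx, mul_comm]
      exact hH.symm
    rw [Cfun, if_neg hz0, hdiv, Tinv_Tfun hc (by linarith [Mfun_nonneg hν hmem])]

theorem tendsto_Cfun {β : Type*} {l : Filter β} {c : β → ℝ} {ν : β → Measure ℝ}
    [∀ b, IsFiniteMeasure (ν b)] (hc : ∀ b, c b ∈ Icc (0 : ℝ) 1)
    (hν : ∀ b, ∀ᵐ t ∂(ν b), t ∈ Icc (-K) K) {c₀ : ℝ} {ν₀ : Measure ℝ} [IsFiniteMeasure ν₀]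
    (hc₀ : c₀ ∈ Icc (0 : ℝ) 1) (hν₀ : ∀ᵐ t ∂ν₀, t ∈ Icc (-K) K) (hcc₀ : Tendsto c l (𝓝 c₀))
    (hM : ∀ w ∈ Ico 0 (K ^ 2)⁻¹, Tendsto (fun b => Mfun (ν b) w) l (𝓝 (Mfun ν₀ w)))
    {z : β → ℝ} {z₀ : ℝ} (hz₀ : z₀ ∈ Ico 0 (K ^ 2)⁻¹) (hz : Tendsto z l (𝓝[Ico 0 (K ^ 2)⁻¹] z₀)) :
    Tendsto (fun b => Cfun (c b) (ν b) K (z b)) l (𝓝 (Cfun c₀ ν₀ K z₀)) := by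
  have hzD : ∀ᶠ b in l, z b ∈ Ico 0 (K ^ 2)⁻¹ := hz.eventually self_mem_nhdsWithin
  have hH : ∀ w ∈ Ico 0 (K ^ 2)⁻¹, Tendsto (fun b => Hfun (c b) (ν b) w) l (𝓝 (Hfun c₀ ν₀ w)) :=
    fun w hw => (((hcc₀.mul (hM w hw)).add_const 1).mul ((hM w hw).add_const 1)).const_mul w
  have hξ := Hinv_mem hc₀ hν₀ hz₀
  have hHinv : Tendsto (fun b => Hinv (c b) (ν b) K (z b)) l
      (𝓝[Ico 0 (K ^ 2)⁻¹] (Hinv c₀ ν₀ K z₀)) := by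
    refine tendsto_nhdsWithin_iff.2 ⟨tendsto_of_monotoneOn_apply_eq ordConnected_Ico
      (fun b => (Hfun_strictMonoOn (hc b) (hν b)).monotoneOn) hH (Hfun_strictMonoOn hc₀ hν₀) hξ
      (y := z) ?_ ?_, ?_⟩
    · rw [Hfun_Hinv hc₀ hν₀ hz₀]
      exact tendsto_nhdsWithin_iff.1 hz |>.1
    · filter_upwards [hzD] with b hb using ⟨Hinv_mem (hc b) (hν b) hb, Hfun_Hinv (hc b) (hν b) hb⟩
    · filter_upwards [hzD] with b hb using Hinv_mem (hc b) (hν b) hb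
  rw [Cfun_eq_Mfun_Hinv hc₀ hν₀ hz₀]
  refine Tendsto.congr' ?_ (tendsto_apply_of_monotoneOn (fun b => Mfun_monotoneOn (hν b)) hM hξ
    (Mfun_continuousOn hν₀ _ hξ) hHinv)
  filter_upwards [hzD] with b hb
  rw [Cfun_eq_Mfun_Hinv (hc b) (hν b) hb]

end RectangularRTransform

section WeakConvergence

variable {ι : Type*} {L : Filter ι}

theorem measure_compl_eq_zero_of_tendsto_integral {Ω : Type*} [MeasurableSpace Ω]
    [TopologicalSpace Ω] [OpensMeasurableSpace Ω] [HasOuterApproxClosed Ω] [L.NeBot]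
    {μs : ι → Measure Ω} {μ : Measure Ω} [∀ i, IsProbabilityMeasure (μs i)]
    [IsProbabilityMeasure μ]
    (hweak : ∀ f : BoundedContinuousFunction Ω ℝ,
      Tendsto (fun i => ∫ ω, f ω ∂(μs i)) L (𝓝 (∫ ω, f ω ∂μ)))
    {F : Set Ω} (hF : IsClosed F) (hμsF : ∀ i, μs i Fᶜ = 0) : μ Fᶜ = 0 := by
  let P : ι → ProbabilityMeasure Ω := fun i => ⟨μs i, inferInstance⟩
  have hP : Tendsto P L (𝓝 ⟨μ, inferInstance⟩) :=
    ProbabilityMeasure.tendsto_iff_forall_integral_tendsto.2 hweak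
  have h := ProbabilityMeasure.le_liminf_measure_open_of_tendsto hP hF.isOpen_compl
  simpa [P, hμsF] using h

theorem tendsto_Mfun_of_tendsto_integral {μs : ι → Measure ℝ} {μ : Measure ℝ}
    (hweak : ∀ f : BoundedContinuousFunction ℝ ℝ,
      Tendsto (fun i => ∫ t, f t ∂(μs i)) L (𝓝 (∫ t, f t ∂μ)))
    {K : ℝ} (hμs : ∀ i, ∀ᵐ t ∂(μs i), t ∈ Icc (-K) K) (hμ : ∀ᵐ t ∂μ, t ∈ Icc (-K) K)
    {z : ℝ} (hz : z ∈ Ico 0 (K ^ 2)⁻¹) :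
    Tendsto (fun i => Mfun (μs i) z) L (𝓝 (Mfun μ z)) := by
  have hKz : K ^ 2 * z < 1 := sq_mul_lt_one_of_mem_Ico hz
  have hle : ∀ t : ℝ, min (t ^ 2) (K ^ 2) * z ≤ K ^ 2 * z := fun t =>
    mul_le_mul_of_nonneg_right (min_le_right _ _) hz.1
  let φ : ℝ → ℝ := fun t => min (t ^ 2) (K ^ 2) * z / (1 - min (t ^ 2) (K ^ 2) * z)
  have hφ : Continuous φ :=
    Continuous.div (by fun_prop) (by fun_prop) fun t => by linarith [hle t]
  have hφ_bdd : ∀ t, ‖φ t‖ ≤ K ^ 2 * z / (1 - K ^ 2 * z) := fun t => by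
    have h0 : 0 ≤ min (t ^ 2) (K ^ 2) * z := mul_nonneg (le_min (sq_nonneg t) (sq_nonneg K)) hz.1
    rw [Real.norm_of_nonneg (div_nonneg h0 (by linarith [hle t]))]
    exact monotoneOn_div_one_sub ((hle t).trans_lt hKz) hKz (hle t)
  have hφM : ∀ ν : Measure ℝ, (∀ᵐ t ∂ν, t ∈ Icc (-K) K) → ∫ t, φ t ∂ν = Mfun ν z :=
    fun ν hν => integral_congr_ae <| hν.mono fun t ht => by
      simp only [φ, min_eq_left (sq_le_sq' ht.1 ht.2)]
  have h := hweak (BoundedContinuousFunction.ofNormedAddCommGroup φ hφ _ hφ_bdd)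
  simp only [BoundedContinuousFunction.coe_ofNormedAddCommGroup, hφM μ hμ] at h
  exact h.congr fun i => hφM (μs i) (hμs i)

end WeakConvergence

theorem stmt12_general (K : ℝ)
    (μs : ℕ → Measure ℝ) (μ : Measure ℝ)
    [∀ n, IsProbabilityMeasure (μs n)] [IsProbabilityMeasure μ]
    (hsupp : ∀ n, μs n (Set.Icc (-K) K)ᶜ = 0)
    (hweak : ∀ f : BoundedContinuousFunction ℝ ℝ,
      Tendsto (fun n => ∫ t, f t ∂(μs n)) atTop (nhds (∫ t, f t ∂μ)))
    (lams : ℕ → ℝ) (lam : ℝ)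
    (hlams : ∀ n, lams n ∈ Set.Icc (0 : ℝ) 1) (hlam : lam ∈ Set.Icc (0 : ℝ) 1)
    (hlamconv : Tendsto lams atTop (nhds lam)) :
    ∀ S ⊆ Set.Ico (0 : ℝ) (K ^ 2)⁻¹, IsCompact S →
      TendstoUniformlyOn (fun n z => Cfun (lams n) (μs n) K z)
        (fun z => Cfun lam μ K z) atTop S := by
  intro S hS hS_cpt
  have hμs : ∀ n, ∀ᵐ t ∂(μs n), t ∈ Icc (-K) K := fun n => mem_ae_iff.2 (hsupp n)
  have hμ : ∀ᵐ t ∂μ, t ∈ Icc (-K) K :=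
    mem_ae_iff.2 (measure_compl_eq_zero_of_tendsto_integral hweak isClosed_Icc hsupp)
  have hM := fun w (hw : w ∈ Ico 0 (K ^ 2)⁻¹) => tendsto_Mfun_of_tendsto_integral hweak hμs hμ hw
  rw [← tendstoLocallyUniformlyOn_iff_tendstoUniformlyOn_of_compact hS_cpt,
    tendstoLocallyUniformlyOn_iff_forall_tendsto]
  intro x hx
  have hxS : Tendsto id (𝓝[S] x) (𝓝[Ico 0 (K ^ 2)⁻¹] x) :=
    tendsto_nhdsWithin_mono_right hS tendsto_id
  refine Tendsto.mono_right (Tendsto.prodMk_nhds ?_ ?_) (nhds_le_uniformity (Cfun lam μ K x))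
  · exact (tendsto_Cfun (fun _ => hlam) (fun _ => hμ) hlam hμ tendsto_const_nhds
      (fun _ _ => tendsto_const_nhds) (hS hx) hxS).comp tendsto_snd
  · exact tendsto_Cfun (c := fun p : ℕ × ℝ => lams p.1) (ν := fun p => μs p.1)
      (fun p => hlams p.1) (fun p => hμs p.1) hlam hμ
      (hlamconv.comp tendsto_fst) (fun w hw => (hM w hw).comp tendsto_fst) (hS hx)
      (hxS.comp tendsto_snd)

/-- If probability measures `μ n` on `[-K,K]` converge weakly to `μ`
and `λ n ∈ [0,1]` converge to `λ`, then `C^{(λ_n)}_{μ_n}` converges to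
`C^{(λ)}_μ` uniformly on every compact subset of `[0, K⁻²)`. -/
theorem stmt12 (K : ℝ) (hK : 0 < K)
    (μs : ℕ → Measure ℝ) (μ : Measure ℝ)
    [∀ n, IsProbabilityMeasure (μs n)] [IsProbabilityMeasure μ]
    (hsupp : ∀ n, μs n (Set.Icc (-K) K)ᶜ = 0)
    (hweak : ∀ f : BoundedContinuousFunction ℝ ℝ,
      Tendsto (fun n => ∫ t, f t ∂(μs n)) atTop (nhds (∫ t, f t ∂μ)))
    (lams : ℕ → ℝ) (lam : ℝ)
    (hlams : ∀ n, lams n ∈ Set.Icc (0 : ℝ) 1) (hlam : lam ∈ Set.Icc (0 : ℝ) 1)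
    (hlamconv : Tendsto lams atTop (nhds lam)) :
    ∀ S ⊆ Set.Ico (0 : ℝ) (K ^ 2)⁻¹, IsCompact S →
      TendstoUniformlyOn (fun n z => Cfun (lams n) (μs n) K z)
        (fun z => Cfun lam μ K z) atTop S :=
  stmt12_general K μs μ hsupp hweak lams lam hlams hlam hlamconv
end

section
/- For any probability measure μ supported in [−K,K] and z in a neighborhood of 0, C^{(0)}_μ(z) = z R_{μ²}(z), where μ² is the push-forward of μ by t ↦ t² and R is the (analytic convention) R-transform. -/
open MeasureTheory

/-!
With `ν = μ²`, the identity `x / (1 - t² x) = (x⁻¹ - t²)⁻¹` gives `H^{(0)}_μ(x) = G_ν(x⁻¹)` for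
`0 < x < K⁻²`. So if `H^{(0)}_μ(x) = z` then `G_ν(x⁻¹) = z = G_ν(G_ν⁻¹(z))`. Since `ν` lives on
`[0, K²]`, `G_ν` is positive and strictly decreasing on `(K², ∞)` and nonpositive on `(-∞, 0]`;
hence `z > 0`, `G_ν⁻¹(z) > K²`, and injectivity gives `G_ν⁻¹(z) = x⁻¹`, i.e.
`z / x - 1 = z (G_ν⁻¹(z) - 1 / z)`.
-/

lemma MeasureTheory.integral_pos_of_ae_pos {α : Type*} [MeasurableSpace α] {μ : Measure α}
    [NeZero μ] {f : α → ℝ} (hf : Integrable f μ) (hpos : ∀ᵐ x ∂μ, 0 < f x) :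
    0 < ∫ x, f x ∂μ := by
  have hsupp : ∀ᵐ x ∂μ, x ∈ Function.support f := hpos.mono fun _ hx => hx.ne'
  rw [integral_pos_iff_support_of_nonneg_ae (hpos.mono fun _ hx => hx.le) hf,
    measure_congr (ae_eq_univ.2 (ae_iff.1 hsupp))]
  exact Measure.measure_univ_pos.2 (NeZero.ne μ)

/-- The Cauchy transform `G_ν`, restricted to real arguments. -/
noncomputable def cauchyTransform (ν : Measure ℝ) (w : ℝ) : ℝ := ∫ s, (w - s)⁻¹ ∂ν

namespace cauchyTransform

variable {ν : Measure ℝ} {L : ℝ}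

lemma integrable_inv_sub [IsFiniteMeasure ν] (hν : ∀ᵐ s ∂ν, s ≤ L) {w : ℝ} (hw : L < w) :
    Integrable (fun s => (w - s)⁻¹) ν := by
  refine Integrable.mono' (integrable_const (w - L)⁻¹) (by fun_prop) ?_
  filter_upwards [hν] with s hs
  rw [Real.norm_eq_abs, abs_of_pos (inv_pos.2 (by linarith))]
  gcongr

lemma pos [IsFiniteMeasure ν] [NeZero ν] (hν : ∀ᵐ s ∂ν, s ≤ L) {w : ℝ} (hw : L < w) :
    0 < cauchyTransform ν w := by
  refine integral_pos_of_ae_pos (integrable_inv_sub hν hw) ?_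
  filter_upwards [hν] with s hs
  exact inv_pos.2 (by linarith)

lemma nonpos_of_nonpos (hν : ∀ᵐ s ∂ν, 0 ≤ s) {w : ℝ} (hw : w ≤ 0) :
    cauchyTransform ν w ≤ 0 := by
  refine integral_nonpos_of_ae ?_
  filter_upwards [hν] with s hs
  exact inv_nonpos.2 (by linarith)

lemma strictAntiOn [IsFiniteMeasure ν] [NeZero ν] (hν : ∀ᵐ s ∂ν, s ≤ L) :
    StrictAntiOn (cauchyTransform ν) (Set.Ioi L) := by
  intro w₁ hw₁ w₂ hw₂ hlt
  have hint₁ := integrable_inv_sub hν hw₁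
  have hint₂ := integrable_inv_sub hν hw₂
  have hdiff : 0 < ∫ s, ((w₁ - s)⁻¹ - (w₂ - s)⁻¹) ∂ν := by
    refine integral_pos_of_ae_pos (hint₁.sub hint₂) ?_
    filter_upwards [hν] with s hs
    have hs₁ : s < w₁ := lt_of_le_of_lt hs hw₁
    rw [sub_pos]
    gcongr
  rw [integral_sub hint₁ hint₂] at hdiff
  exact sub_pos.1 hdiff

end cauchyTransform

lemma Hfun_zero_eq_cauchyTransform_map_sq (μ : Measure ℝ) [IsProbabilityMeasure μ] {L x : ℝ}
    (hμ : ∀ᵐ s ∂(Measure.map (fun t : ℝ => t ^ 2) μ), s ≤ L) (hx : 0 < x) (hxL : L < x⁻¹) :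
    Hfun 0 μ x = cauchyTransform (Measure.map (fun t : ℝ => t ^ 2) μ) x⁻¹ := by
  have hsq : AEMeasurable (fun t : ℝ => t ^ 2) μ := by fun_prop
  have hint : Integrable (fun t : ℝ => (x⁻¹ - t ^ 2)⁻¹) μ :=
    (cauchyTransform.integrable_inv_sub hμ hxL).comp_aemeasurable hsq
  have hM : Mfun μ x = ∫ t, (x⁻¹ * (x⁻¹ - t ^ 2)⁻¹ - 1) ∂μ := by
    refine integral_congr_ae ?_
    filter_upwards [ae_of_ae_map hsq hμ] with t ht
    have hden : 1 - t ^ 2 * x ≠ 0 := by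
      have : t ^ 2 * x < 1 := by
        simpa [hx.ne'] using mul_lt_mul_of_pos_right (ht.trans_lt hxL) hx
      linarith
    field_simp
    ring
  rw [cauchyTransform, integral_map hsq (by fun_prop), Hfun, Tfun, hM,
    integral_sub (hint.const_mul _) (integrable_const 1), integral_const_mul]
  simp only [zero_mul, zero_add, one_mul, integral_const, probReal_univ, smul_eq_mul, mul_one]
  field_simp
  ring

theorem stmt15_general (K : ℝ) (μ : Measure ℝ) [IsProbabilityMeasure μ]
    (hsupp : μ (Set.Icc (-K) K)ᶜ = 0)
    (Ginv : ℝ → ℝ) (δ : ℝ) (hδ : 0 < δ)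
    (hGinv : ∀ z : ℝ, 0 < |z| → |z| < δ →
      K ^ 2 < |Ginv z| ∧
        (∫ s, (Ginv z - s)⁻¹ ∂(Measure.map (fun t : ℝ => t ^ 2) μ)) = z) :
    ∃ ε > 0, ∀ z : ℝ, 0 < |z| → |z| < ε →
      ∀ x ∈ Set.Ico (0 : ℝ) (K ^ 2)⁻¹, Hfun 0 μ x = z →
        ∀ γ : ℝ, γ = z / x - 1 →
          γ = z * (Ginv z - 1 / z) := by
  set ν := Measure.map (fun t : ℝ => t ^ 2) μ
  have : IsProbabilityMeasure ν := Measure.isProbabilityMeasure_map (by fun_prop)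
  have hν_nonneg : ∀ᵐ s ∂ν, 0 ≤ s :=
    (ae_map_iff (by fun_prop) measurableSet_Ici).2 (ae_of_all _ sq_nonneg)
  have hν_le : ∀ᵐ s ∂ν, s ≤ K ^ 2 := by
    refine (ae_map_iff (by fun_prop) measurableSet_Iic).2 ?_
    filter_upwards [measure_eq_zero_iff_ae_notMem.1 hsupp] with t ht
    exact sq_le_sq' (not_not.1 ht).1 (not_not.1 ht).2
  refine ⟨δ, hδ, fun z hz0 hzδ x hx hH γ hγ => ?_⟩
  obtain ⟨hGinv_abs, hGinv_eq : cauchyTransform ν (Ginv z) = z⟩ := hGinv z hz0 hzδ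
  have hx0 : 0 < x := hx.1.lt_of_ne fun h => by simp [← hH, ← h, Hfun] at hz0
  have hxK : K ^ 2 < x⁻¹ := (lt_inv_comm₀ (inv_pos.1 (hx.1.trans_lt hx.2)) hx0).2 hx.2
  have hGx : cauchyTransform ν x⁻¹ = z :=
    (Hfun_zero_eq_cauchyTransform_map_sq μ hν_le hx0 hxK).symm.trans hH
  have hz : 0 < z := hGx ▸ cauchyTransform.pos hν_le hxK
  have hGinv_pos : 0 < Ginv z := not_le.1 fun h =>
    (cauchyTransform.nonpos_of_nonpos hν_nonneg h).not_gt (by rwa [hGinv_eq])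
  have hGinv_K : K ^ 2 < Ginv z := abs_of_pos hGinv_pos ▸ hGinv_abs
  have hGinv_x : Ginv z = x⁻¹ :=
    (cauchyTransform.strictAntiOn hν_le).injOn hGinv_K hxK
      (hGinv_eq.trans hGx.symm)
  rw [hγ, hGinv_x]
  field_simp

/-- For `μ` a probability measure supported in `[-K,K]` and `z` in a
neighborhood of `0`, `C^{(0)}_μ(z) = z R_{μ²}(z)`, where `μ²` is the push-forward
of `μ` by `t ↦ t²` and `R_ν(z) = G_ν⁻¹(z) - 1/z` is the (analytic) R-transform,
`G_ν(w) = ∫ (w - s)⁻¹ dν(s)` and `Ginv` its local inverse near `0`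
(characterized by `G_{μ²}(Ginv z) = z` with `|Ginv z| > K²`). Here
`C^{(0)}_μ(z) = z/(H^{(0)}_μ)⁻¹(z) - 1` is expressed as the `γ = z/x - 1` with
`H^{(0)}_μ(x) = z`, `x ∈ [0, K⁻²)`. -/
theorem stmt15 (K : ℝ) (hK : 0 < K) (μ : Measure ℝ) [IsProbabilityMeasure μ]
    (hsupp : μ (Set.Icc (-K) K)ᶜ = 0)
    (Ginv : ℝ → ℝ) (δ : ℝ) (hδ : 0 < δ)
    (hGinv : ∀ z : ℝ, 0 < |z| → |z| < δ →
      K ^ 2 < |Ginv z| ∧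
        (∫ s, (Ginv z - s)⁻¹ ∂(Measure.map (fun t : ℝ => t ^ 2) μ)) = z) :
    ∃ ε > 0, ∀ z : ℝ, 0 < |z| → |z| < ε →
      ∀ x ∈ Set.Ico (0 : ℝ) (K ^ 2)⁻¹, Hfun 0 μ x = z →
        ∀ γ : ℝ, γ = z / x - 1 →
          γ = z * (Ginv z - 1 / z) :=
  stmt15_general K μ hsupp Ginv δ hδ hGinv
end
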